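/- arXiv:1403.4916 — 2 statements merged into one kernel-verified Lean document; each statement's English description precedes it below -/
import Mathlib

section
/- Let M be a partial Steiner triple system and m > 2 an integer. If M is Pasch-free (contains no Veblen configuration), then Π(m,M) is Pasch-free as well. -/
/-- A partial Steiner triple system on point set `P`, given by its set of lines. -/
def IsPSTS {P : Type*} (L : Set (Set P)) : Prop :=
  (∀ l ∈ L, l.ncard = 3) ∧
  ∀ l₁ ∈ L, ∀ l₂ ∈ L, ∀ p q : P, p ≠ q → p ∈ l₁ → q ∈ l₁ → p ∈ l₂ → q ∈ l₂ → l₁ = l₂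

/-- The lines of the configuration `m`-weaved from a PSTS with line set `L`. -/
def weaveLines {P : Type*} (m : ℕ) (L : Set (Set P)) : Set (Set (P × ZMod m)) :=
  { w | ∃ (a b c : P) (i j k : ZMod m), ({a, b, c} : Set P) ∈ L ∧
      ((i = j ∧ i = k - 1) ∨ (i = k ∧ i = j - 1) ∨ (j = k ∧ j = i - 1)) ∧
      w = {(a, i), (b, j), (c, k)} }

/-- The incidence structure with line set `L` contains a Veblen (= Pasch)
configuration: six distinct points `p, q, a, b, c, d` with four lines
`{p,a,b}, {p,c,d}, {q,a,c}, {q,b,d}`. -/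
def HasVeblen {P : Type*} (L : Set (Set P)) : Prop :=
  ∃ p q a b c d : P, List.Pairwise (· ≠ ·) [p, q, a, b, c, d] ∧
    ({p, a, b} : Set P) ∈ L ∧ ({p, c, d} : Set P) ∈ L ∧
    ({q, a, c} : Set P) ∈ L ∧ ({q, b, d} : Set P) ∈ L

def WR {m : ℕ} (i j k : ZMod m) : Prop :=
  (i = j ∧ k = i + 1) ∨ (i = k ∧ j = i + 1) ∨ (j = k ∧ i = j + 1)

lemma WR_of {m : ℕ} {i j k : ZMod m}
    (h : (i = j ∧ i = k - 1) ∨ (i = k ∧ i = j - 1) ∨ (j = k ∧ j = i - 1)) :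
    WR i j k := by
  unfold WR
  rcases h with ⟨h1, h2⟩ | ⟨h1, h2⟩ | ⟨h1, h2⟩ <;>
    rw [eq_sub_iff_add_eq] at h2 <;> tauto

lemma WR_swap₁ {m : ℕ} {i j k : ZMod m} (h : WR i j k) : WR j i k := by
  unfold WR at *
  rcases h with ⟨rfl, h2⟩ | ⟨rfl, h2⟩ | ⟨rfl, h2⟩ <;> tauto

lemma WR_swap₂ {m : ℕ} {i j k : ZMod m} (h : WR i j k) : WR i k j := by
  unfold WR at *
  rcases h with ⟨rfl, h2⟩ | ⟨rfl, h2⟩ | ⟨rfl, h2⟩ <;> tauto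

lemma zmodContra {m : ℕ} (hm : 2 < m) {α α' β β' γ γ' : ZMod m}
    (hα : α ≠ α') (hβ : β ≠ β') (hγ : γ ≠ γ')
    (h1 : WR α β γ) (h2 : WR α γ' β') (h3 : WR α' β γ') (h4 : WR α' γ β') : False := by
  haveI : NeZero m := ⟨by omega⟩
  have e1 : (1 : ZMod m) ≠ 0 := by
    intro hc
    have h' : ((1 : ℕ) : ZMod m) = 0 := by push_cast; exact hc
    rw [ZMod.natCast_eq_zero_iff] at h'
    have := Nat.le_of_dvd one_pos h'
    omega
  have e2 : (1 : ZMod m) + 1 ≠ 0 := by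
    intro hc
    have h' : ((2 : ℕ) : ZMod m) = 0 := by push_cast [one_add_one_eq_two] at hc ⊢; exact hc
    rw [ZMod.natCast_eq_zero_iff] at h'
    have := Nat.le_of_dvd (by norm_num) h'
    omega
  unfold WR at h1 h2 h3 h4
  rcases h1 with ⟨q1, q2⟩ | ⟨q1, q2⟩ | ⟨q1, q2⟩ <;>
  rcases h2 with ⟨r1, r2⟩ | ⟨r1, r2⟩ | ⟨r1, r2⟩ <;>
  rcases h3 with ⟨s1, s2⟩ | ⟨s1, s2⟩ | ⟨s1, s2⟩ <;>
  rcases h4 with ⟨t1, t2⟩ | ⟨t1, t2⟩ | ⟨t1, t2⟩ <;>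
  subst_vars <;>
  first
    | exact hα rfl
    | exact hβ rfl
    | exact hγ rfl
    | (simp only [add_assoc, left_eq_add, add_eq_left, add_right_inj] at *; tauto)

lemma tripleNe {α : Type*} {a b c : α} (h : ({a, b, c} : Set α).ncard = 3) :
    a ≠ b ∧ a ≠ c ∧ b ≠ c := by
  have key : ∀ (x y : α), ({x, y} : Set α).ncard ≤ 2 := fun x y =>
    (Set.ncard_insert_le _ _).trans (by simp)
  refine ⟨?_, ?_, ?_⟩ <;> rintro rfl
  · rw [Set.insert_idem] at h
    have := key a c; omega
  · rw [Set.insert_comm, Set.pair_eq_singleton] at h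
    have := key b a; omega
  · rw [Set.pair_eq_singleton] at h
    have := key a b; omega

lemma extract {P : Type*} {L : Set (Set P)} (hM : IsPSTS L) {m : ℕ}
    {x y z : P × ZMod m} (hxy : x ≠ y) (hxz : x ≠ z) (hyz : y ≠ z)
    (hw : ({x, y, z} : Set (P × ZMod m)) ∈ weaveLines m L) :
    ({x.1, y.1, z.1} : Set P) ∈ L ∧ WR x.2 y.2 z.2 ∧ x.1 ≠ y.1 ∧ x.1 ≠ z.1 ∧ y.1 ≠ z.1 := by
  obtain ⟨a, b, c, i, j, k, hL, hR, hEq⟩ := hw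
  obtain ⟨hab, hac, hbc⟩ := tripleNe (hM.1 _ hL)
  have hR' : WR i j k := WR_of hR
  have hx : x = (a, i) ∨ x = (b, j) ∨ x = (c, k) := by
    have : x ∈ ({(a, i), (b, j), (c, k)} : Set (P × ZMod m)) := by rw [← hEq]; simp
    simpa using this
  have hy : y = (a, i) ∨ y = (b, j) ∨ y = (c, k) := by
    have : y ∈ ({(a, i), (b, j), (c, k)} : Set (P × ZMod m)) := by rw [← hEq]; simp
    simpa using this
  have hz : z = (a, i) ∨ z = (b, j) ∨ z = (c, k) := by
    have : z ∈ ({(a, i), (b, j), (c, k)} : Set (P × ZMod m)) := by rw [← hEq]; simp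
    simpa using this
  rcases hx with rfl | rfl | rfl <;> rcases hy with rfl | rfl | rfl <;>
    rcases hz with rfl | rfl | rfl <;>
    first
      | exact absurd rfl hxy
      | exact absurd rfl hxz
      | exact absurd rfl hyz
      | (refine ⟨?_, ?_, ?_, ?_, ?_⟩ <;>
          first
            | exact hab
            | exact hac
            | exact hbc
            | exact hab.symm
            | exact hac.symm
            | exact hbc.symm
            | exact hR'
            | exact WR_swap₁ hR'
            | exact WR_swap₂ hR'
            | exact WR_swap₁ (WR_swap₂ hR')
            | exact WR_swap₂ (WR_swap₁ hR')
            | exact WR_swap₁ (WR_swap₂ (WR_swap₁ hR'))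
            | (convert hL using 1 <;>
                (ext t; simp only [Set.mem_insert_iff, Set.mem_singleton_iff]; tauto)))

/-- If `M` is Pasch-free then `Π(m,M)` is Pasch-free as well. -/
theorem weave_paschFree {P : Type*} (L : Set (Set P)) (m : ℕ)
    (hM : IsPSTS L) (hm : 2 < m) (h : ¬ HasVeblen L) :
    ¬ HasVeblen (weaveLines m L) := by
  rintro ⟨p, q, a, b, c, d, hpw, l1, l2, l3, l4⟩
  obtain ⟨⟨hpq, hpa, hpb, hpc, hpd⟩, ⟨hqa, hqb, hqc, hqd⟩, ⟨hab', hac', had'⟩,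
      ⟨hbc', hbd'⟩, hcd'⟩ :
      (p ≠ q ∧ p ≠ a ∧ p ≠ b ∧ p ≠ c ∧ p ≠ d) ∧ (q ≠ a ∧ q ≠ b ∧ q ≠ c ∧ q ≠ d) ∧
      (a ≠ b ∧ a ≠ c ∧ a ≠ d) ∧ (b ≠ c ∧ b ≠ d) ∧ c ≠ d := by
    simpa [List.pairwise_cons] using hpw
  obtain ⟨hL1, hW1, h1a, h1b, h1ab⟩ := extract hM hpa hpb hab' l1
  obtain ⟨hL2, hW2, h2a, h2b, h2ab⟩ := extract hM hpc hpd hcd' l2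
  obtain ⟨hL3, hW3, h3a, h3b, h3ab⟩ := extract hM hqa hqc hac' l3
  obtain ⟨hL4, hW4, h4a, h4b, h4ab⟩ := extract hM hqb hqd hbd' l4
  by_cases hdeg : p.1 = q.1 ∨ a.1 = d.1 ∨ b.1 = c.1
  · -- degenerate case
    -- step 1 : b.1 = c.1
    have hbc1 : b.1 = c.1 := by
      rcases hdeg with hpq1 | had1 | hbc1
      · -- p = q : lines {p,a,b} and {q,a,c}={p,a,c} share p,a
        rw [← hpq1] at hL3
        have e : ({p.1, a.1, b.1} : Set P) = {p.1, a.1, c.1} :=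
          hM.2 _ hL1 _ hL3 p.1 a.1 h1a (by simp) (by simp) (by simp) (by simp)
        have hb : b.1 ∈ ({p.1, a.1, c.1} : Set P) := e ▸ (by simp)
        simp only [Set.mem_insert_iff, Set.mem_singleton_iff] at hb
        rcases hb with hb | hb | hb
        · exact absurd hb.symm h1b
        · exact absurd hb.symm h1ab
        · exact hb
      · -- a = d : lines {p,a,b} and {p,c,d}={p,c,a} share p,a
        rw [← had1] at hL2
        have e : ({p.1, a.1, b.1} : Set P) = {p.1, c.1, a.1} :=
          hM.2 _ hL1 _ hL2 p.1 a.1 h1a (by simp) (by simp) (by simp) (by simp)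
        have hb : b.1 ∈ ({p.1, c.1, a.1} : Set P) := e ▸ (by simp)
        simp only [Set.mem_insert_iff, Set.mem_singleton_iff] at hb
        rcases hb with hb | hb | hb
        · exact absurd hb.symm h1b
        · exact hb
        · exact absurd hb.symm h1ab
      · exact hbc1
    -- step 2 : p.1 = q.1
    have hpq1 : p.1 = q.1 := by
      rw [← hbc1] at hL3
      have e : ({p.1, a.1, b.1} : Set P) = {q.1, a.1, b.1} :=
        hM.2 _ hL1 _ hL3 a.1 b.1 h1ab (by simp) (by simp) (by simp) (by simp)
      have hp : p.1 ∈ ({q.1, a.1, b.1} : Set P) := e ▸ (by simp)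
      simp only [Set.mem_insert_iff, Set.mem_singleton_iff] at hp
      rcases hp with hp | hp | hp
      · exact hp
      · exact absurd hp h1a
      · exact absurd hp h1b
    -- step 3 : a.1 = d.1
    have had1 : a.1 = d.1 := by
      rw [← hbc1] at hL2
      have e : ({p.1, a.1, b.1} : Set P) = {p.1, b.1, d.1} :=
        hM.2 _ hL1 _ hL2 p.1 b.1 h1b (by simp) (by simp) (by simp) (by simp)
      have ha : a.1 ∈ ({p.1, b.1, d.1} : Set P) := e ▸ (by simp)
      simp only [Set.mem_insert_iff, Set.mem_singleton_iff] at ha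
      rcases ha with ha | ha | ha
      · exact absurd ha.symm h1a
      · exact absurd ha h1ab
      · exact ha
    -- weights contradiction
    have hα : p.2 ≠ q.2 := fun he => hpq (Prod.ext hpq1 he)
    have hβ : a.2 ≠ d.2 := fun he => had' (Prod.ext had1 he)
    have hγ : b.2 ≠ c.2 := fun he => hbc' (Prod.ext hbc1 he)
    exact zmodContra hm hα hβ hγ hW1 hW2 hW3 hW4
  · push_neg at hdeg
    obtain ⟨hPQ, hAD, hBC⟩ := hdeg
    refine h ⟨p.1, q.1, a.1, b.1, c.1, d.1, ?_, hL1, hL2, hL3, hL4⟩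
    simpa [List.pairwise_cons] using
      (⟨⟨hPQ, h1a, h1b, h2a, h2b⟩, ⟨h3a, h4a, h3b, h4b⟩, ⟨h1ab, h3ab, hAD⟩,
        ⟨hBC, h4ab⟩, h2ab⟩ :
      (p.1 ≠ q.1 ∧ p.1 ≠ a.1 ∧ p.1 ≠ b.1 ∧ p.1 ≠ c.1 ∧ p.1 ≠ d.1) ∧
      (q.1 ≠ a.1 ∧ q.1 ≠ b.1 ∧ q.1 ≠ c.1 ∧ q.1 ≠ d.1) ∧
      (a.1 ≠ b.1 ∧ a.1 ≠ c.1 ∧ a.1 ≠ d.1) ∧ (b.1 ≠ c.1 ∧ b.1 ≠ d.1) ∧ c.1 ≠ d.1)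
end

section
/- Let M be a partial Steiner triple system which contains a hyperplane that is an anti-clique (every line of M meets it in exactly one point), and let m > 2 be an integer. Then Π(m,M) also contains a hyperplane that is an anti-clique; in fact, if H is such a hyperplane of M then H × C_m is such a hyperplane of Π(m,M). -/
/-- Two points are collinear when some line contains both. -/
def Coll {P : Type*} (L : Set (Set P)) (p q : P) : Prop :=
  ∃ l ∈ L, p ∈ l ∧ q ∈ l

/-- `H` is a hyperplane: every line meets `H`. -/
def IsHyperplane {P : Type*} (L : Set (Set P)) (H : Set P) : Prop :=
  ∀ l ∈ L, ∃ p ∈ l, p ∈ H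

/-- `H` is an anti-clique: no two distinct points of `H` are collinear. -/
def IsAntiClique {P : Type*} (L : Set (Set P)) (H : Set P) : Prop :=
  ∀ p ∈ H, ∀ q ∈ H, p ≠ q → ¬ Coll L p q

lemma triple_ne {P : Type*} {a b c : P} (h : ({a, b, c} : Set P).ncard = 3) :
    a ≠ b ∧ a ≠ c ∧ b ≠ c := by
  refine ⟨?_, ?_, ?_⟩ <;> rintro rfl
  · have : ({a, a, c} : Set P) = {a, c} := by simp
    rw [this] at h
    have := Set.ncard_insert_le a ({c} : Set P)
    simp [Set.ncard_singleton] at this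
    omega
  · have : ({a, b, a} : Set P) = {a, b} := by
      ext x; simp; tauto
    rw [this] at h
    have := Set.ncard_insert_le a ({b} : Set P)
    simp [Set.ncard_singleton] at this
    omega
  · have : ({a, b, b} : Set P) = {a, b} := by simp
    rw [this] at h
    have := Set.ncard_insert_le a ({b} : Set P)
    simp [Set.ncard_singleton] at this
    omega

/-- If `H` is a hyperplane of a PSTS `M` which is an anti-clique and `m > 2`, then
`H × C_m` is a hyperplane of `Π(m,M)` which is an anti-clique; in particular
`Π(m,M)` contains a hyperplane which is an anti-clique. -/
theorem weave_hyperplane {P : Type*} (L : Set (Set P)) (m : ℕ)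
    (hM : IsPSTS L) (hm : 2 < m)
    (H : Set P) (hH : IsHyperplane L H) (hA : IsAntiClique L H) :
    IsHyperplane (weaveLines m L) (H ×ˢ (Set.univ : Set (ZMod m))) ∧
    IsAntiClique (weaveLines m L) (H ×ˢ (Set.univ : Set (ZMod m))) := by
  constructor
  · rintro w ⟨a, b, c, i, j, k, hL, _, rfl⟩
    obtain ⟨p, hp, hpH⟩ := hH _ hL
    rcases hp with rfl | rfl | rfl
    · exact ⟨(p, i), by simp, by simp [hpH]⟩
    · exact ⟨(p, j), by simp, by simp [hpH]⟩
    · exact ⟨(p, k), by simp, by simp [hpH]⟩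
  · rintro ⟨p, i⟩ hp ⟨q, j⟩ hq hpq ⟨w, ⟨a, b, c, x, y, z, hL, _, rfl⟩, h1, h2⟩
    simp only [Set.mem_prod, Set.mem_univ, and_true] at hp hq
    have h3 := triple_ne ((hM.1 _ hL))
    by_cases hpqe : p = q
    · subst hpqe
      have hij : i ≠ j := fun h => hpq (by rw [h])
      simp only [Set.mem_insert_iff, Set.mem_singleton_iff, Prod.mk.injEq] at h1 h2
      rcases h1 with ⟨rfl, rfl⟩ | ⟨rfl, rfl⟩ | ⟨rfl, rfl⟩ <;>
        rcases h2 with ⟨h, rfl⟩ | ⟨h, rfl⟩ | ⟨h, rfl⟩ <;>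
        first
          | exact hij rfl
          | exact h3.1 h.symm
          | exact h3.1 h
          | exact h3.2.1 h.symm
          | exact h3.2.1 h
          | exact h3.2.2 h.symm
          | exact h3.2.2 h
    · have hpl : p ∈ ({a, b, c} : Set P) := by
        simp only [Set.mem_insert_iff, Set.mem_singleton_iff, Prod.mk.injEq] at h1
        rcases h1 with ⟨rfl, _⟩ | ⟨rfl, _⟩ | ⟨rfl, _⟩ <;> simp
      have hql : q ∈ ({a, b, c} : Set P) := by
        simp only [Set.mem_insert_iff, Set.mem_singleton_iff, Prod.mk.injEq] at h2
        rcases h2 with ⟨rfl, _⟩ | ⟨rfl, _⟩ | ⟨rfl, _⟩ <;> simp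
      exact hA p hp q hq hpqe ⟨_, hL, hpl, hql⟩
end
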